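/- arXiv:1310.7242 — 4 statements merged into one kernel-verified Lean document; each statement's English description precedes it below -/
import Mathlib

section
/- For any two distinct elements γ, ξ of Γ, one has ∏_{k=1}^∞ cos(2π(γ−ξ)/4^k) = 0; hence the exponentials e_γ(x) = e^{2πiγx} and e_ξ(x) = e^{2πiξx} are orthogonal in L²(μ). -/
open MeasureTheory Real

def GammaSet : Set ℕ := {n | ∀ d ∈ Nat.digits 4 n, d ≤ 1}

/-!
If `γ ≠ ξ` have base-4 digits in `{0, 1}`, then at the lowest position `m` where their digits
differ the difference of the digits is `±1`, so `γ - ξ = 4 ^ m * u` with `u` odd. The factor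
`cos (2π (γ - ξ) / 4 ^ (m + 1)) = cos (π u / 2)` of the infinite product then vanishes. Since
`e_γ * conj e_ξ = e_{γ - ξ}`, the `L²(μ)` inner product is `μ̂ (γ - ξ)`, which is that
product.
-/

namespace GammaSet

lemma mod_four_le_one {n : ℕ} (hn : n ∈ GammaSet) : n % 4 ≤ 1 := by
  rcases Nat.eq_zero_or_pos n with rfl | hpos
  · simp
  exact hn _ (by rw [Nat.digits_def' (by norm_num) hpos]; exact List.mem_cons_self)

lemma div_four_mem {n : ℕ} (hn : n ∈ GammaSet) : n / 4 ∈ GammaSet := by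
  rcases Nat.eq_zero_or_pos n with rfl | hpos
  · simpa using hn
  intro d hd
  exact hn d (by rw [Nat.digits_def' (by norm_num) hpos]; exact List.mem_cons_of_mem _ hd)

lemma exists_sub_eq_four_pow_mul_odd {γ ξ : ℕ} (hγ : γ ∈ GammaSet) (hξ : ξ ∈ GammaSet)
    (hne : γ ≠ ξ) : ∃ (m : ℕ) (u : ℤ), Odd u ∧ (γ : ℤ) - ξ = 4 ^ m * u := by
  induction hsum : γ + ξ using Nat.strong_induction_on generalizing γ ξ with
  | _ n ih =>
    have hγ4 := mod_four_le_one hγ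
    have hξ4 := mod_four_le_one hξ
    by_cases hlast : γ % 4 = ξ % 4
    · have hdiv : γ / 4 ≠ ξ / 4 := fun h ↦ hne (by omega)
      obtain ⟨m, u, hu, hsub⟩ :=
        ih _ (by omega) (div_four_mem hγ) (div_four_mem hξ) hdiv rfl
      refine ⟨m + 1, u, hu, ?_⟩
      rw [pow_succ', mul_assoc, ← hsub]
      omega
    · -- the last digits are `0` and `1`, so `γ - ξ` is odd
      exact ⟨0, (γ : ℤ) - ξ, by rw [Int.odd_iff]; omega, by ring⟩

end GammaSet

lemma cos_two_pi_four_pow_mul_odd_div_four_pow_succ {u : ℤ} (hu : Odd u) (m : ℕ) :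
    cos (2 * π * (4 ^ m * u) / 4 ^ (m + 1)) = 0 := by
  obtain ⟨k, rfl⟩ := hu
  rw [Real.cos_eq_zero_iff]
  refine ⟨k, ?_⟩
  push_cast
  field_simp
  ring

lemma exp_mul_conj_exp (a b x : ℝ) :
    Complex.exp (2 * π * Complex.I * a * x) *
        (starRingEnd ℂ) (Complex.exp (2 * π * Complex.I * b * x)) =
      Complex.exp (2 * π * Complex.I * ((a - b : ℝ) : ℂ) * x) := by
  rw [← Complex.exp_conj, ← Complex.exp_add]
  congr 1
  simp only [map_mul, Complex.conj_I, Complex.conj_ofReal, map_ofNat]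
  push_cast
  ring

theorem gamma_exponentials_orthogonal_general
    (μ : Measure ℝ)
    (hfour : ∀ t : ℝ, ∫ x, Complex.exp (2 * π * Complex.I * t * x) ∂μ =
      ∏' k : ℕ, (Real.cos (2 * π * t / 4 ^ (k + 1)) : ℂ))
    {γ ξ : ℕ} (hγ : γ ∈ GammaSet) (hξ : ξ ∈ GammaSet) (hne : γ ≠ ξ) :
    (∏' k : ℕ, Real.cos (2 * π * ((γ : ℝ) - ξ) / 4 ^ (k + 1))) = 0 ∧
    ∫ x, Complex.exp (2 * π * Complex.I * γ * x) *
        (starRingEnd ℂ) (Complex.exp (2 * π * Complex.I * ξ * x)) ∂μ = 0 := by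
  obtain ⟨m, u, hu, hsub⟩ := GammaSet.exists_sub_eq_four_pow_mul_odd hγ hξ hne
  have hfactor : cos (2 * π * ((γ : ℝ) - ξ) / 4 ^ (m + 1)) = 0 := by
    have hsubR : (γ : ℝ) - ξ = 4 ^ m * u := by exact_mod_cast hsub
    rw [hsubR, cos_two_pi_four_pow_mul_odd_div_four_pow_succ hu]
  refine ⟨tprod_of_exists_eq_zero ⟨m, hfactor⟩, ?_⟩
  calc ∫ x, Complex.exp (2 * π * Complex.I * γ * x) *
        (starRingEnd ℂ) (Complex.exp (2 * π * Complex.I * ξ * x)) ∂μ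
      = ∫ x, Complex.exp (2 * π * Complex.I * (((γ : ℝ) - ξ : ℝ) : ℂ) * x) ∂μ := by
        simp_rw [← exp_mul_conj_exp, Complex.ofReal_natCast]
    _ = ∏' k : ℕ, (cos (2 * π * ((γ : ℝ) - ξ) / 4 ^ (k + 1)) : ℂ) := hfour _
    _ = 0 := tprod_of_exists_eq_zero ⟨m, by rw [hfactor, Complex.ofReal_zero]⟩

theorem gamma_exponentials_orthogonal
    (μ : Measure ℝ) [IsProbabilityMeasure μ]
    (hfour : ∀ t : ℝ, ∫ x, Complex.exp (2 * π * Complex.I * t * x) ∂μ =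
      ∏' k : ℕ, (Real.cos (2 * π * t / 4 ^ (k + 1)) : ℂ))
    {γ ξ : ℕ} (hγ : γ ∈ GammaSet) (hξ : ξ ∈ GammaSet) (hne : γ ≠ ξ) :
    (∏' k : ℕ, Real.cos (2 * π * ((γ : ℝ) - ξ) / 4 ^ (k + 1))) = 0 ∧
    ∫ x, Complex.exp (2 * π * Complex.I * γ * x) *
        (starRingEnd ℂ) (Complex.exp (2 * π * Complex.I * ξ * x)) ∂μ = 0 :=
  gamma_exponentials_orthogonal_general μ hfour hγ hξ hne
end

section
/- If p is an odd integer, then for any distinct γ, ξ ∈ Γ, μ̂(p(γ − ξ)) = 0; hence E(pΓ) = {e^{2πipγx} : γ ∈ Γ} is an orthonormal family in L²(μ). -/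
open MeasureTheory Real

lemma gamma_mod (n : ℕ) (hn : n ∈ GammaSet) : n % 4 ≤ 1 ∧ n / 4 ∈ GammaSet := by
  rcases Nat.eq_zero_or_pos n with h | h
  · subst h; simp [GammaSet]
  · have hd := Nat.digits_def' (by norm_num : 1 < 4) h
    simp only [GammaSet, Set.mem_setOf_eq, hd, List.mem_cons] at hn ⊢
    exact ⟨hn _ (Or.inl rfl), fun d hdm => hn d (Or.inr hdm)⟩

lemma gamma_diff : ∀ N γ ξ : ℕ, γ + ξ ≤ N → γ ∈ GammaSet → ξ ∈ GammaSet → γ ≠ ξ →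
    ∃ (j : ℕ) (u : ℤ), Odd u ∧ (γ : ℤ) - ξ = 4 ^ j * u := by
  intro N
  induction N with
  | zero => intro γ ξ h _ _ hne; omega
  | succ N ih =>
    intro γ ξ hle hγ hξ hne
    obtain ⟨hr1, hq1⟩ := gamma_mod γ hγ
    obtain ⟨hr2, hq2⟩ := gamma_mod ξ hξ
    by_cases h : γ % 4 = ξ % 4
    · have hne' : γ / 4 ≠ ξ / 4 := by omega
      have hle' : γ / 4 + ξ / 4 ≤ N := by omega
      obtain ⟨j, u, hu, heq⟩ := ih (γ / 4) (ξ / 4) hle' hq1 hq2 hne'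
      refine ⟨j + 1, u, hu, ?_⟩
      have h4 : (γ : ℤ) - ξ = 4 * (((γ / 4 : ℕ) : ℤ) - ((ξ / 4 : ℕ) : ℤ)) := by
        push_cast; omega
      rw [h4, heq]; ring
    · refine ⟨0, (γ : ℤ) - ξ, ?_, by ring⟩
      rw [Int.odd_iff]
      omega

lemma conj_exp {z : ℂ} (hz : (starRingEnd ℂ) z = -z) :
    (starRingEnd ℂ) (Complex.exp z) = Complex.exp (-z) := by
  rw [← Complex.exp_conj, hz]

theorem scaled_gamma_orthonormal
    (μ : Measure ℝ) [IsProbabilityMeasure μ]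
    (hfour : ∀ t : ℝ, ∫ x, Complex.exp (2 * π * Complex.I * t * x) ∂μ =
      ∏' k : ℕ, (Real.cos (2 * π * t / 4 ^ (k + 1)) : ℂ))
    (p : ℤ) (hp : Odd p) :
    (∀ γ ∈ GammaSet, ∀ ξ ∈ GammaSet, γ ≠ ξ →
      ∫ x, Complex.exp (2 * π * Complex.I * ((p : ℝ) * ((γ : ℝ) - ξ)) * x) ∂μ = 0) ∧
    (∀ γ ∈ GammaSet, ∀ ξ ∈ GammaSet,
      ∫ x, Complex.exp (2 * π * Complex.I * ((p : ℝ) * γ) * x) *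
          (starRingEnd ℂ) (Complex.exp (2 * π * Complex.I * ((p : ℝ) * ξ) * x)) ∂μ =
        if γ = ξ then 1 else 0) := by
  have part1 : ∀ γ ∈ GammaSet, ∀ ξ ∈ GammaSet, γ ≠ ξ →
      ∫ x, Complex.exp (2 * π * Complex.I * ((p : ℝ) * ((γ : ℝ) - ξ)) * x) ∂μ = 0 := by
    intro γ hγ ξ hξ hne
    obtain ⟨j, u, hu, heq⟩ := gamma_diff (γ + ξ) γ ξ le_rfl hγ hξ hne
    set t : ℝ := (p : ℝ) * ((γ : ℝ) - ξ) with ht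
    have hfun : ∀ x : ℝ,
        Complex.exp (2 * π * Complex.I * ((p : ℝ) * ((γ : ℝ) - ξ)) * x) =
        Complex.exp (2 * π * Complex.I * (t : ℝ) * x) := by
      intro x
      congr 1
      rw [ht]
      push_cast
      ring
    simp only [hfun]
    rw [hfour t]
    -- the j-th factor vanishes
    have hpu : Odd (p * u) := hp.mul hu
    obtain ⟨n, hn⟩ := hpu
    have htval : t = 4 ^ j * ((p * u : ℤ) : ℝ) := by
      have h' : ((γ : ℝ) - ξ) = 4 ^ j * (u : ℝ) := by
        have := congrArg (fun z : ℤ => (z : ℝ)) heq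
        push_cast at this
        linarith
      rw [ht, h']
      push_cast
      ring
    have hcos : Real.cos (2 * π * t / 4 ^ (j + 1)) = 0 := by
      rw [Real.cos_eq_zero_iff]
      refine ⟨n, ?_⟩
      rw [htval]
      have hpn : ((p * u : ℤ) : ℝ) = 2 * n + 1 := by rw [hn]; push_cast; ring
      have h4j : (4 : ℝ) ^ j ≠ 0 := by positivity
      rw [hpn]
      rw [show (4 : ℝ) ^ (j + 1) = 4 * 4 ^ j by ring]
      field_simp
      ring
    have hfj : (Real.cos (2 * π * t / 4 ^ (j + 1)) : ℂ) = 0 := by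
      rw [hcos]; norm_num
    have hzero : HasProd (fun k : ℕ => (Real.cos (2 * π * t / 4 ^ (k + 1)) : ℂ)) 0 := by
      have hev : (fun _ : Finset ℕ => (0 : ℂ)) =ᶠ[Filter.atTop]
          fun s => ∏ k ∈ s, (Real.cos (2 * π * t / 4 ^ (k + 1)) : ℂ) := by
        filter_upwards [Filter.eventually_ge_atTop ({j} : Finset ℕ)] with s hs
        exact (Finset.prod_eq_zero (hs (Finset.mem_singleton_self j)) hfj).symm
      exact Filter.Tendsto.congr' hev tendsto_const_nhds
    exact hzero.tprod_eq
  refine ⟨part1, ?_⟩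
  intro γ hγ ξ hξ
  by_cases h : γ = ξ
  · subst h
    rw [if_pos rfl]
    have hone : ∀ x : ℝ, Complex.exp (2 * π * Complex.I * ((p : ℝ) * γ) * x) *
        (starRingEnd ℂ) (Complex.exp (2 * π * Complex.I * ((p : ℝ) * γ) * x)) = 1 := by
      intro x
      rw [conj_exp (by
        simp only [map_mul, Complex.conj_I, Complex.conj_ofReal, map_ofNat, map_natCast,
          map_intCast]
        ring), ← Complex.exp_add]
      rw [show 2 * (π : ℂ) * Complex.I * ((p : ℝ) * γ) * x +
        -(2 * (π : ℂ) * Complex.I * ((p : ℝ) * γ) * x) = 0 by ring, Complex.exp_zero]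
    simp only [hone]
    simp
  · rw [if_neg h]
    have hkey : ∀ x : ℝ, Complex.exp (2 * π * Complex.I * ((p : ℝ) * γ) * x) *
        (starRingEnd ℂ) (Complex.exp (2 * π * Complex.I * ((p : ℝ) * ξ) * x)) =
        Complex.exp (2 * π * Complex.I * ((p : ℝ) * ((γ : ℝ) - ξ)) * x) := by
      intro x
      rw [conj_exp (by
        simp only [map_mul, Complex.conj_I, Complex.conj_ofReal, map_ofNat, map_natCast,
          map_intCast]
        ring), ← Complex.exp_add]
      congr 1
      push_cast
      ring
    simp only [hkey]
    exact part1 γ hγ ξ hξ h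
end

section
/- Let p be an odd positive integer such that pΓ is again a spectrum (i.e., {e^{2πipγx}} is an ONB of L²(μ)), and let U_p be the unitary with U_p e_γ = e_{pγ}. Then U_p commutes with S₀, and U_p S₁ U_p* = M_{p−1} S₁, where M_{p−1} is multiplication by e^{2πi(p−1)x}. -/
open MeasureTheory ContinuousLinearMap Real

lemma mem4 {n : ℕ} (h : n ∈ GammaSet) : 4 * n ∈ GammaSet := by
  intro d hd
  rcases Nat.eq_zero_or_pos n with h0 | h0
  · simp [h0] at hd
  · rw [Nat.digits_def' (by norm_num : 1 < 4) (by positivity)] at hd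
    simp only [Nat.mul_mod_right, Nat.mul_div_cancel_left _ (by norm_num : 0 < 4),
      List.mem_cons] at hd
    rcases hd with rfl | hd
    · exact zero_le_one
    · exact h d hd

lemma mem4add1 {n : ℕ} (h : n ∈ GammaSet) : 4 * n + 1 ∈ GammaSet := by
  intro d hd
  rw [Nat.digits_def' (by norm_num : 1 < 4) (by positivity)] at hd
  have h1 : (4 * n + 1) % 4 = 1 := by omega
  have h2 : (4 * n + 1) / 4 = n := by omega
  rw [h1, h2, List.mem_cons] at hd
  rcases hd with rfl | hd
  · exact le_refl 1
  · exact h d hd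

theorem Up_conjugation
    (μ : Measure ℝ) [IsProbabilityMeasure μ]
    (e : ℤ → Lp ℂ 2 μ)
    (he : ∀ n : ℤ, (e n : ℝ → ℂ) =ᵐ[μ]
      fun x => Complex.exp (2 * π * Complex.I * (n : ℂ) * (x : ℂ)))
    (b : HilbertBasis GammaSet ℂ (Lp ℂ 2 μ))
    (hb : ∀ γ : GammaSet, b γ = e ((γ : ℕ) : ℤ))
    (S₀ S₁ M : Lp ℂ 2 μ →L[ℂ] Lp ℂ 2 μ)
    (hS₀ : ∀ n : ℤ, S₀ (e n) = e (4 * n))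
    (hS₁ : ∀ n : ℤ, S₁ (e n) = e (4 * n + 1))
    (p : ℕ) (hp : Odd p) (hppos : 0 < p)
    (U : Lp ℂ 2 μ →L[ℂ] Lp ℂ 2 μ)
    (hU_unitary : U * adjoint U = 1 ∧ adjoint U * U = 1)
    (hU : ∀ γ : GammaSet, U (e ((γ : ℕ) : ℤ)) = e ((p * (γ : ℕ) : ℕ) : ℤ))
    (hM : ∀ f : Lp ℂ 2 μ, (M f : ℝ → ℂ) =ᵐ[μ]
      fun x => Complex.exp (2 * π * Complex.I * ((p : ℂ) - 1) * (x : ℂ)) * f x) :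
    U * S₀ = S₀ * U ∧ U * S₁ * adjoint U = M * S₁ := by
  have hdense : Dense ((Submodule.span ℂ (Set.range b) : Submodule ℂ (Lp ℂ 2 μ)) : Set (Lp ℂ 2 μ)) :=
    Submodule.dense_iff_topologicalClosure_eq_top.mpr b.dense_span
  have hext : ∀ (A B : Lp ℂ 2 μ →L[ℂ] Lp ℂ 2 μ), (∀ γ : GammaSet, A (b γ) = B (b γ)) → A = B := by
    intro A B hAB
    refine ContinuousLinearMap.ext_on hdense ?_
    rintro x ⟨γ, rfl⟩
    exact hAB γ
  constructor
  · refine hext _ _ fun γ => ?_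
    have h4 : e (4 * ((γ : ℕ) : ℤ)) = e (((4 * (γ : ℕ) : ℕ) : ℤ)) := by push_cast; ring_nf
    have h4' := hU ⟨4 * (γ : ℕ), mem4 γ.2⟩
    simp only [ContinuousLinearMap.mul_apply, hb, hS₀, h4]
    rw [h4', hU γ, hS₀]
    congr 1
    push_cast
    ring
  · have key : U * S₁ = M * S₁ * U := by
      refine hext _ _ fun γ => ?_
      have h5 : e (4 * ((γ : ℕ) : ℤ) + 1) = e (((4 * (γ : ℕ) + 1 : ℕ) : ℤ)) := by push_cast; ring_nf
      have h5' := hU ⟨4 * (γ : ℕ) + 1, mem4add1 γ.2⟩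
      simp only [ContinuousLinearMap.mul_apply, hb, hS₁, h5]
      rw [h5', hU γ, hS₁]
      -- LHS: e (p * (4γ+1)), RHS: M (e (4*(pγ)+1))
      refine (Lp.ext ?_ ).symm
      refine (hM _).trans ?_
      have h1 := he (4 * ((p * (γ : ℕ) : ℕ) : ℤ) + 1)
      have h2 := he ((p * (4 * (γ : ℕ) + 1) : ℕ) : ℤ)
      filter_upwards [h1, h2] with x hx1 hx2
      rw [hx1, hx2, ← Complex.exp_add]
      congr 1
      push_cast
      ring
    rw [key, mul_assoc, hU_unitary.1, mul_one]
end

section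
/- Define c_m(t) = Σ_{γ∈Γ} |μ̂(t − 4γ − m)|² for t ∈ ℝ. If both 5Γ and 7Γ are spectra for μ (so that c₀ + c₁ = c₀ + c₅ = c₀ + c₇ ≡ 1), then c₁ is 2-periodic: c₁(t + 2) = c₁(t) for all t ∈ ℝ. -/
open Real

/-- The Fourier transform of the 1/4 Bernoulli convolution, as an infinite product. -/
noncomputable def muhat (t : ℝ) : ℝ := ∏' k : ℕ, Real.cos (2 * π * t / 4 ^ (k + 1))

/-- The spectral function `c_m(t) = Σ_{γ∈Γ} |μ̂(t − 4γ − m)|²`. -/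
noncomputable def c (m t : ℝ) : ℝ := ∑' γ : GammaSet, (muhat (t - 4 * (γ : ℕ) - m)) ^ 2

lemma c_shift (m t : ℝ) : c m t = c 1 (t - m + 1) := by
  unfold c
  exact tsum_congr fun γ => by ring_nf

theorem c1_two_periodic
    (h1 : ∀ t : ℝ, c 0 t + c 1 t = 1)
    (h5 : ∀ t : ℝ, c 0 t + c 5 t = 1)
    (h7 : ∀ t : ℝ, c 0 t + c 7 t = 1) :
    ∀ t : ℝ, c 1 (t + 2) = c 1 t := by
  have p4 : ∀ t : ℝ, c 1 (t - 4) = c 1 t := by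
    intro t
    have := h1 t
    have h5' := h5 t
    rw [c_shift 5 t] at h5'
    have : c 1 (t - 5 + 1) = c 1 t := by linarith
    simpa [show t - 5 + 1 = t - 4 by ring] using this
  have p6 : ∀ t : ℝ, c 1 (t - 6) = c 1 t := by
    intro t
    have := h1 t
    have h7' := h7 t
    rw [c_shift 7 t] at h7'
    have : c 1 (t - 7 + 1) = c 1 t := by linarith
    simpa [show t - 7 + 1 = t - 6 by ring] using this
  intro t
  calc c 1 (t + 2) = c 1 (t + 6 - 4) := by ring_nf
    _ = c 1 (t + 6) := p4 (t + 6)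
    _ = c 1 (t + 6 - 6) := (p6 (t + 6)).symm
    _ = c 1 t := by ring_nf
end
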